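/- Let M ∈ {0,1}^{15×6} be the edge-matching incidence matrix of the Petersen graph (rows indexed by edges, columns by perfect matchings, M[e][m] = 1 iff edge e belongs to matching m). Then the only integer points in the convex hull of the 6 columns of M are the columns themselves. -/

import Mathlib

/-!
Every edge of the Petersen graph lies in exactly two perfect matchings, and any two perfect
matchings share exactly one edge; both facts are checked by enumerating the 5-edge subsets of
its 15 edges. Hence for any two matchings `j ≠ k` some row of the incidence matrix is the
indicator of `{j, k}`. If `v = ∑ₗ uₗ • colₗ` is a convex combination with integer coordinates,
every `u j + u k` with `j ≠ k` is therefore an integer in `[0, 1]`, and with at least three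
columns this forces `u` to be a unit vector.
-/

/-- The Petersen graph, presented as the Kneser graph `K(5,2)`: vertices are the
2-element subsets of `Fin 5`, adjacent iff disjoint. -/
def Petersen : SimpleGraph {s : Finset (Fin 5) // s.card = 2} where
  Adj a b := Disjoint a.1 b.1
  symm := ⟨fun a b h => h.symm⟩
  loopless := ⟨fun a h => by
    have h := Finset.disjoint_self_iff_empty _ |>.mp h
    have h2 := a.2
    rw [h] at h2
    simp at h2⟩

open Finset

section ConvexHull

variable {ι : Type*} [Fintype ι]

theorem convexHull_range_eq_image_stdSimplex {R E : Type*} [Field R] [LinearOrder R]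
    [IsStrictOrderedRing R] [AddCommGroup E] [Module R E] (g : ι → E) :
    convexHull R (Set.range g) = Fintype.linearCombination R g '' stdSimplex R ι := by
  classical
  rw [← convexHull_basis_eq_stdSimplex, LinearMap.image_convexHull, ← Set.range_comp]
  congr 2
  funext i
  simp [Fintype.linearCombination_apply]

theorem exists_eq_single_of_mem_stdSimplex [DecidableEq ι] {u : ι → ℝ} (hu : u ∈ stdSimplex ℝ ι)
    (hcard : 2 < Fintype.card ι) (hint : ∀ j k, j ≠ k → ∃ n : ℤ, u j + u k = n) :
    ∃ j, u = Pi.single j 1 := by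
  obtain ⟨hu0, hu1⟩ := hu
  have hsub (s : Finset ι) : ∑ l ∈ s, u l ≤ 1 :=
    hu1 ▸ sum_le_sum_of_subset_of_nonneg (subset_univ s) fun l _ _ => hu0 l
  obtain ⟨j, hj⟩ : ∃ j, 0 < u j := by
    by_contra! h
    linarith [sum_nonpos (s := univ) fun l _ => h l]
  -- every pair sum through `j` is an integer in `(0, 1]`, hence `1`
  have hcompl : ∀ k, k ≠ j → u k = 1 - u j := by
    intro k hkj
    obtain ⟨n, hn⟩ := hint j k hkj.symm
    have hpos : (0 : ℝ) < n := hn ▸ add_pos_of_pos_of_nonneg hj (hu0 k)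
    have hle : (n : ℝ) ≤ 1 := by rw [← hn, ← sum_pair hkj.symm]; exact hsub _
    have : n = 1 := by
      have : 0 < n := by exact_mod_cast hpos
      have : n ≤ 1 := by exact_mod_cast hle
      omega
    rw [this, Int.cast_one] at hn
    linarith
  obtain ⟨k, hk, m, hm, hkm⟩ := one_lt_card.mp (by
    rw [card_erase_of_mem (mem_univ j), card_univ]; omega : 1 < #(univ.erase j))
  have hkj := ne_of_mem_erase hk
  have hmj := ne_of_mem_erase hm
  have h3 := hsub {j, k, m}
  rw [sum_insert (by simp [hkj.symm, hmj.symm]), sum_pair hkm, hcompl k hkj, hcompl m hmj] at h3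
  have hj1 : u j = 1 := le_antisymm (by linarith [hu0 k, hcompl k hkj]) (by linarith)
  refine ⟨j, funext fun l => ?_⟩
  rcases eq_or_ne l j with rfl | hlj
  · simp [hj1]
  · simp [hcompl l hlj, hj1, hlj]

theorem mem_range_of_integral_mem_convexHull [DecidableEq ι] {κ : Type*} (g : ι → κ → ℝ)
    (hcard : 2 < Fintype.card ι)
    (hpair : ∀ j k, j ≠ k → ∃ i, ∀ l, g l i = if l = j ∨ l = k then 1 else 0)
    {v : κ → ℝ} (hv : v ∈ convexHull ℝ (Set.range g)) (hint : ∀ i, ∃ n : ℤ, v i = n) :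
    v ∈ Set.range g := by
  rw [convexHull_range_eq_image_stdSimplex] at hv
  obtain ⟨u, hu, rfl⟩ := hv
  have hcoord (i : κ) : Fintype.linearCombination ℝ g u i = ∑ l, u l * g l i := by
    simp [Fintype.linearCombination_apply]
  obtain ⟨j, rfl⟩ := exists_eq_single_of_mem_stdSimplex hu hcard fun j k hjk => by
    obtain ⟨i, hi⟩ := hpair j k hjk
    obtain ⟨n, hn⟩ := hint i
    refine ⟨n, ?_⟩
    rw [← hn, hcoord]
    have hpair_set : ({l | l = j ∨ l = k} : Finset ι) = {j, k} := by ext; simp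
    simp only [hi, mul_ite, mul_one, mul_zero]
    rw [← sum_filter, hpair_set, sum_pair hjk]
  exact ⟨j, by ext i; simp [hcoord, Pi.single_apply]⟩

end ConvexHull

namespace SimpleGraph

variable {V : Type*} {G : SimpleGraph V}

theorem Subgraph.IsSpanning.eq_of_spanningCoe_eq {M N : G.Subgraph} (hM : M.IsSpanning)
    (hN : N.IsSpanning) (h : M.spanningCoe = N.spanningCoe) : M = N :=
  Subgraph.verts_spanningCoe_injective (Prod.ext (hM.verts_eq_univ.trans hN.verts_eq_univ.symm) h)

variable [Fintype V] [DecidableEq V]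

-- The cardinality condition follows from the covering one; it only keeps the enumeration small.
variable (G) in
def perfectMatchingEdgeFinsets [DecidableRel G.Adj] : Finset (Finset (Sym2 V)) :=
  {S ∈ G.edgeFinset.powersetCard (Fintype.card V / 2) | ∀ v, #{e ∈ S | v ∈ e} = 1}

theorem Subgraph.IsPerfectMatching.edgeFinset_mem_perfectMatchingEdgeFinsets [DecidableRel G.Adj]
    {M : G.Subgraph} [Fintype M.spanningCoe.edgeSet] (hM : M.IsPerfectMatching) :
    M.spanningCoe.edgeFinset ∈ G.perfectMatchingEdgeFinsets := by
  classical
  have hdeg (v : V) : M.spanningCoe.degree v = 1 := by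
    rw [degree_spanningCoe]
    exact Subgraph.isPerfectMatching_iff_forall_degree.mp hM v
  have hcard : Fintype.card V = 2 * #M.spanningCoe.edgeFinset := by
    have := M.spanningCoe.sum_degrees_eq_twice_card_edges
    simp only [hdeg, sum_const, card_univ, smul_eq_mul, mul_one] at this
    convert this
  simp only [perfectMatchingEdgeFinsets, mem_filter, mem_powersetCard]
  refine ⟨⟨edgeFinset_subset_edgeFinset.mpr M.spanningCoe_le, by omega⟩, fun v => ?_⟩
  rw [← incidenceFinset_eq_filter, card_incidenceFinset_eq_degree, hdeg]

end SimpleGraph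

instance : DecidableRel Petersen.Adj := fun a b => inferInstanceAs (Decidable (Disjoint a.1 b.1))

set_option maxRecDepth 2000 in
theorem Petersen.card_filter_mem_perfectMatchingEdgeFinsets :
    ∀ e ∈ Petersen.edgeFinset, #{S ∈ Petersen.perfectMatchingEdgeFinsets | e ∈ S} = 2 := by
  decide +kernel

set_option maxRecDepth 2000 in
theorem Petersen.card_inter_of_mem_perfectMatchingEdgeFinsets {S T : Finset (Sym2 _)}
    (hS : S ∈ Petersen.perfectMatchingEdgeFinsets) (hT : T ∈ Petersen.perfectMatchingEdgeFinsets)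
    (hST : S ≠ T) : #(S ∩ T) = 1 := by
  -- Quantifying over the product lets the kernel evaluate `perfectMatchingEdgeFinsets` only once.
  have key : ∀ p ∈ Petersen.perfectMatchingEdgeFinsets ×ˢ Petersen.perfectMatchingEdgeFinsets,
      p.1 ≠ p.2 → #(p.1 ∩ p.2) = 1 := by
    decide +kernel
  exact key (S, T) (mem_product.mpr ⟨hS, hT⟩) hST

open SimpleGraph in
theorem Petersen.exists_edge_mem_perfectMatching_iff {M N : Petersen.Subgraph}
    (hM : M.IsPerfectMatching) (hN : N.IsPerfectMatching) (hMN : M ≠ N) :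
    ∃ e ∈ Petersen.edgeSet, ∀ P : Petersen.Subgraph, P.IsPerfectMatching →
      (e ∈ P.edgeSet ↔ P = M ∨ P = N) := by
  classical
  have hinj {P Q : Petersen.Subgraph} (hP : P.IsPerfectMatching) (hQ : Q.IsPerfectMatching)
      (h : P.spanningCoe.edgeFinset = Q.spanningCoe.edgeFinset) : P = Q :=
    hP.2.eq_of_spanningCoe_eq hQ.2 (edgeFinset_inj.mp h)
  have hMmem := hM.edgeFinset_mem_perfectMatchingEdgeFinsets
  have hNmem := hN.edgeFinset_mem_perfectMatchingEdgeFinsets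
  obtain ⟨e, he⟩ := card_eq_one.mp <| card_inter_of_mem_perfectMatchingEdgeFinsets hMmem hNmem
    fun h => hMN (hinj hM hN h)
  have heMN : e ∈ M.spanningCoe.edgeFinset ∩ N.spanningCoe.edgeFinset := he ▸ mem_singleton_self e
  rw [mem_inter] at heMN
  have hthrough : {S ∈ Petersen.perfectMatchingEdgeFinsets | e ∈ S} =
      {M.spanningCoe.edgeFinset, N.spanningCoe.edgeFinset} := by
    refine (eq_of_subset_of_card_le ?_ ?_).symm
    · intro S hS
      rcases mem_insert.mp hS with rfl | hS
      · exact mem_filter.mpr ⟨hMmem, heMN.1⟩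
      · rw [mem_singleton.mp hS]; exact mem_filter.mpr ⟨hNmem, heMN.2⟩
    · rw [card_filter_mem_perfectMatchingEdgeFinsets e
        (edgeFinset_subset_edgeFinset.mpr M.spanningCoe_le heMN.1),
        card_pair fun h => hMN (hinj hM hN h)]
  refine ⟨e, M.edgeSet_subset (by simpa using heMN.1), fun P hP => ?_⟩
  have hiff : e ∈ P.edgeSet ↔ P.spanningCoe.edgeFinset ∈
      {S ∈ Petersen.perfectMatchingEdgeFinsets | e ∈ S} := by
    simp [hP.edgeFinset_mem_perfectMatchingEdgeFinsets]
  rw [hiff, hthrough, mem_insert, mem_singleton]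
  constructor
  · rintro (h | h)
    exacts [Or.inl (hinj hP hM h), Or.inr (hinj hP hN h)]
  · rintro (rfl | rfl) <;> simp

open scoped Classical

noncomputable def incMatR (eE : Fin 15 ≃ Petersen.edgeSet)
    (eM : Fin 6 ≃ {M : Petersen.Subgraph // M.IsPerfectMatching}) :
    Matrix (Fin 15) (Fin 6) ℝ :=
  fun i j => if (eE i : Sym2 _) ∈ (eM j).1.edgeSet then 1 else 0

/-- The only integer points in the convex hull of the 6 columns of the
edge/matching incidence matrix of the Petersen graph are the columns themselves. -/
theorem stmt7 (eE : Fin 15 ≃ Petersen.edgeSet)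
    (eM : Fin 6 ≃ {M : Petersen.Subgraph // M.IsPerfectMatching}) :
    {v : Fin 15 → ℝ | v ∈ convexHull ℝ (Set.range fun j i => incMatR eE eM i j) ∧
        ∀ i, ∃ n : ℤ, v i = (n : ℝ)} =
      Set.range (fun j i => incMatR eE eM i j) := by
  set g : Fin 6 → Fin 15 → ℝ := fun j i => incMatR eE eM i j
  have hpair : ∀ j k, j ≠ k → ∃ i, ∀ l, g l i = if l = j ∨ l = k then 1 else 0 := by
    intro j k hjk
    obtain ⟨e, he, hiff⟩ := Petersen.exists_edge_mem_perfectMatching_iff (eM j).2 (eM k).2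
      (Subtype.coe_ne_coe.mpr (eM.injective.ne hjk))
    refine ⟨eE.symm ⟨e, he⟩, fun l => ?_⟩
    simp only [g, incMatR, Equiv.apply_symm_apply, hiff _ (eM l).2, Subtype.coe_inj,
      eM.injective.eq_iff]
  ext v
  refine ⟨fun ⟨hv, hint⟩ => mem_range_of_integral_mem_convexHull g (by simp) hpair hv hint, ?_⟩
  rintro ⟨j, rfl⟩
  refine ⟨subset_convexHull ℝ _ ⟨j, rfl⟩, fun i => ?_⟩
  by_cases h : (eE i : Sym2 _) ∈ (eM j).1.edgeSet
  · exact ⟨1, by simp [g, incMatR, h]⟩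
  · exact ⟨0, by simp [g, incMatR, h]⟩
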